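/- arXiv:2210.14277 — 5 statements merged into one kernel-verified Lean document; each statement's English description precedes it below -/
import Mathlib

section
/- Let G be a finite simple graph, M a matching on G, and P an M-augmenting path in G from vertex a to vertex b with edge set E(P). Then the set of vertices matched by the matching M Δ E(P) equals the set of M-matched vertices together with {a, b}; in particular, every M-matched vertex remains matched after augmenting, and both endpoints of P become matched. -/
/-- A vertex `v` is matched by the edge set `M` if it is an endpoint of some edge of `M`. -/
def Matched {V : Type*} (M : Set (Sym2 V)) (v : V) : Prop := ∃ e ∈ M, v ∈ e

/-- `M` is a matching on `G`: a set of edges of `G`, no two of which share a vertex. -/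
def IsMatching {V : Type*} (G : SimpleGraph V) (M : Set (Sym2 V)) : Prop :=
  M ⊆ G.edgeSet ∧ ∀ e ∈ M, ∀ f ∈ M, e ≠ f → ∀ v : V, v ∈ e → v ∉ f

/-- An `M`-augmenting path: a path with at least one edge, whose edges alternate between
not in `M` and in `M`, and whose endpoints are `M`-unmatched. -/
def IsAugPath {V : Type*} (G : SimpleGraph V) (M : Set (Sym2 V)) {a b : V}
    (p : G.Walk a b) : Prop :=
  p.IsPath ∧ p.edges ≠ [] ∧
    List.Chain' (fun e f => (e ∈ M ↔ f ∉ M)) p.edges ∧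
    ¬ Matched M a ∧ ¬ Matched M b

private lemma aux_notM {V : Type*} {G : SimpleGraph V} (M : Set (Sym2 V)) :
    ∀ {a b : V} (p : G.Walk a b),
    List.Chain' (fun e f => (e ∈ M ↔ f ∉ M)) p.edges →
    ∀ z e, e ∈ p.edges → e ∉ M → z ∈ e →
    (z = a ∧ p.edges.head? = some e) ∨ z = b ∨ Matched M z := by
  intro a b p
  induction p with
  | nil => intro _ z e he _ _; simp at he
  | @cons u x w hadj q ih =>
    intro hc z e he heM hz
    rw [SimpleGraph.Walk.edges_cons] at he hc ⊢
    rcases List.mem_cons.mp he with rfl | he'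
    · rcases Sym2.mem_iff.mp hz with hzu | hzx
      · exact Or.inl ⟨hzu, rfl⟩
      · subst hzx
        cases q with
        | nil => exact Or.inr (Or.inl rfl)
        | @cons _ y _ hadj' q' =>
          rw [SimpleGraph.Walk.edges_cons] at hc
          have halt := (List.isChain_cons_cons.mp hc).1
          refine Or.inr (Or.inr ⟨s(z, y), ?_, Sym2.mem_mk_left _ _⟩)
          tauto
    · have hct : List.Chain' (fun e f => (e ∈ M ↔ f ∉ M)) q.edges := hc.tail
      rcases ih hct z e he' heM hz with ⟨hzx, hh⟩ | hb | hm
      · subst hzx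
        cases q with
        | nil => simp at he'
        | @cons _ y _ hadj' q' =>
          rw [SimpleGraph.Walk.edges_cons] at hh hc
          simp only [List.head?_cons, Option.some.injEq] at hh
          subst hh
          have halt := (List.isChain_cons_cons.mp hc).1
          refine Or.inr (Or.inr ⟨s(u, z), ?_, Sym2.mem_mk_right _ _⟩)
          tauto
      · exact Or.inr (Or.inl hb)
      · exact Or.inr (Or.inr hm)

private lemma aux_inM {V : Type*} {G : SimpleGraph V} (M : Set (Sym2 V)) :
    ∀ {a b : V} (p : G.Walk a b), ¬ Matched M b →
    List.Chain' (fun e f => (e ∈ M ↔ f ∉ M)) p.edges →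
    ∀ z e, e ∈ p.edges → e ∈ M → z ∈ e →
    (z = a ∧ p.edges.head? = some e) ∨ ∃ f ∈ p.edges, f ∉ M ∧ z ∈ f := by
  intro a b p
  induction p with
  | nil => intro _ _ z e he _ _; simp at he
  | @cons u x w hadj q ih =>
    intro hb hc z e he heM hz
    rw [SimpleGraph.Walk.edges_cons] at he hc ⊢
    rcases List.mem_cons.mp he with rfl | he'
    · rcases Sym2.mem_iff.mp hz with hzu | hzx
      · exact Or.inl ⟨hzu, rfl⟩
      · subst hzx
        cases q with
        | nil => exact absurd ⟨s(u, w), heM, Sym2.mem_mk_right _ _⟩ hb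
        | @cons _ y _ hadj' q' =>
          rw [SimpleGraph.Walk.edges_cons] at hc
          have halt := (List.isChain_cons_cons.mp hc).1
          refine Or.inr ⟨s(z, y), List.mem_cons_of_mem _
            (by rw [SimpleGraph.Walk.edges_cons]; exact List.mem_cons_self), ?_,
            Sym2.mem_mk_left _ _⟩
          tauto
    · have hct : List.Chain' (fun e f => (e ∈ M ↔ f ∉ M)) q.edges := hc.tail
      rcases ih hb hct z e he' heM hz with ⟨hzx, hh⟩ | ⟨f, hf, hfM, hzf⟩
      · subst hzx
        cases q with
        | nil => simp at he'
        | @cons _ y _ hadj' q' =>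
          rw [SimpleGraph.Walk.edges_cons] at hh hc
          simp only [List.head?_cons, Option.some.injEq] at hh
          subst hh
          have halt := (List.isChain_cons_cons.mp hc).1
          refine Or.inr ⟨s(u, z), List.mem_cons_self, ?_, Sym2.mem_mk_right _ _⟩
          tauto
      · exact Or.inr ⟨f, List.mem_cons_of_mem _ hf, hfM, hzf⟩

private lemma end_matched {V : Type*} {G : SimpleGraph V} (M : Set (Sym2 V)) {a b : V}
    (p : G.Walk a b) (hne : p.edges ≠ []) (ha : ¬ Matched M a) :
    Matched (symmDiff M {e | e ∈ p.edges}) a := by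
  cases p with
  | nil => simp at hne
  | @cons _ x _ hadj q =>
    have h1 : s(a, x) ∈ (SimpleGraph.Walk.cons hadj q).edges := by
      rw [SimpleGraph.Walk.edges_cons]; exact List.mem_cons_self
    have h2 : s(a, x) ∉ M := fun h => ha ⟨s(a, x), h, Sym2.mem_mk_left _ _⟩
    exact ⟨s(a, x), Set.mem_symmDiff.mpr (Or.inr ⟨h1, h2⟩), Sym2.mem_mk_left _ _⟩

theorem augment_matched_verts {V : Type*} [Fintype V] (G : SimpleGraph V)
    (M : Set (Sym2 V)) (hM : IsMatching G M) {a b : V} (p : G.Walk a b)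
    (hp : IsAugPath G M p) :
    {v : V | Matched (symmDiff M {e | e ∈ p.edges}) v} = {v : V | Matched M v} ∪ {a, b} ∧
      (∀ v : V, Matched M v → Matched (symmDiff M {e | e ∈ p.edges}) v) ∧
      Matched (symmDiff M {e | e ∈ p.edges}) a ∧
      Matched (symmDiff M {e | e ∈ p.edges}) b := by
  obtain ⟨hpath, hne, hc, ha, hb⟩ := hp
  have hpres : ∀ v : V, Matched M v → Matched (symmDiff M {e | e ∈ p.edges}) v := by
    intro v ⟨e, heM, hve⟩
    by_cases hep : e ∈ p.edges
    · rcases aux_inM M p hb hc v e hep heM hve with ⟨rfl, _⟩ | ⟨f, hf, hfM, hvf⟩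
      · exact absurd ⟨e, heM, hve⟩ ha
      · exact ⟨f, Set.mem_symmDiff.mpr (Or.inr ⟨hf, hfM⟩), hvf⟩
    · exact ⟨e, Set.mem_symmDiff.mpr (Or.inl ⟨heM, hep⟩), hve⟩
  have hA : Matched (symmDiff M {e | e ∈ p.edges}) a := end_matched M p hne ha
  have hB : Matched (symmDiff M {e | e ∈ p.edges}) b := by
    have hset : {e : Sym2 V | e ∈ p.reverse.edges} = {e : Sym2 V | e ∈ p.edges} := by
      ext e; simp [SimpleGraph.Walk.edges_reverse]
    have hne' : p.reverse.edges ≠ [] := by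
      simp only [SimpleGraph.Walk.edges_reverse]
      simpa using hne
    have := end_matched M p.reverse hne' hb
    rwa [hset] at this
  refine ⟨?_, hpres, hA, hB⟩
  ext v
  simp only [Set.mem_setOf_eq, Set.mem_union, Set.mem_insert_iff, Set.mem_singleton_iff]
  constructor
  · rintro ⟨e, heM', hve⟩
    rcases Set.mem_symmDiff.mp heM' with ⟨h1, h2⟩ | ⟨h1, h2⟩
    · exact Or.inl ⟨e, h1, hve⟩
    · rcases aux_notM M p hc v e h1 h2 hve with ⟨rfl, _⟩ | rfl | hm
      · exact Or.inr (Or.inl rfl)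
      · exact Or.inr (Or.inr rfl)
      · exact Or.inl hm
  · rintro (hm | rfl | rfl)
    · exact hpres v hm
    · exact hA
    · exact hB
end

section
/- Let G be a finite simple graph, M a matching on G, and C an M-alternating cycle rooted at a vertex v, of length 2k+1. Then the induced edge set M/C on the contraction G/C is a matching on G/C, and |M/C| = |M| − k. -/
/-- An `M`-alternating cycle rooted at `v`: a closed walk at `v` of odd length with pairwise
distinct edges, visiting no vertex other than `v` twice, whose edges alternate between not
in `M` and in `M`, beginning and ending with edges not in `M` (the `i`-th edge lies in `M`
exactly when `i` is odd). -/
def IsAltCycle {V : Type*} (G : SimpleGraph V) (M : Set (Sym2 V)) {v : V}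
    (c : G.Walk v v) : Prop :=
  c.IsCycle ∧ Odd c.length ∧
    ∀ (i : ℕ) (h : i < c.edges.length), (c.edges.get ⟨i, h⟩ ∈ M ↔ Odd i)

/-- The contraction `G/C`: the simple graph on `(V ∖ C) ∪ {B}` (with `B = none` the new
vertex) in which two old vertices are adjacent iff they are adjacent in `G`, and `B` is
adjacent to an old vertex `u` iff some vertex of `C` is adjacent to `u` in `G`. -/
def contraction {V : Type*} (G : SimpleGraph V) (C : Set V) :
    SimpleGraph (Option {x : V // x ∉ C}) where
  Adj x y :=
    match x, y with
    | some u, some w => G.Adj u.1 w.1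
    | some u, none => ∃ c ∈ C, G.Adj u.1 c
    | none, some w => ∃ c ∈ C, G.Adj w.1 c
    | none, none => False
  symm := by
    constructor
    rintro (_ | u) (_ | w) h
    · exact h
    · exact h
    · exact h
    · exact G.adj_symm h
  loopless := by
    constructor
    rintro (_ | u) h
    · exact h
    · exact G.loopless.irrefl u.1 h

/-- The edge set `M/C` induced on `G/C` by an edge set `M` of `G`: the edges of `M` with no
endpoint in `C`, together with the edge `{B, u}` for each edge of `M` with exactly one
endpoint in `C`. -/
def contractEdges {V : Type*} (C : Set V) (M : Set (Sym2 V)) :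
    Set (Sym2 (Option {x : V // x ∉ C})) :=
  {e | (∃ (u w : V) (hu : u ∉ C) (hw : w ∉ C),
          s(u, w) ∈ M ∧ e = s(some ⟨u, hu⟩, some ⟨w, hw⟩)) ∨
       (∃ (u c : V) (hu : u ∉ C), c ∈ C ∧ s(u, c) ∈ M ∧ e = s(none, some ⟨u, hu⟩))}

open SimpleGraph

lemma edges_get_eq {V : Type*} {G : SimpleGraph V} {u w : V} (p : G.Walk u w) (i : ℕ)
    (h : i < p.edges.length) :
    p.edges.get ⟨i, h⟩ = s(p.getVert i, p.getVert (i+1)) := by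
  induction p generalizing i with
  | nil => simp at h
  | cons hadj q ih =>
    cases i with
    | zero => simp [Walk.getVert, Walk.getVert_zero]
    | succ n =>
      simp only [Walk.edges_cons, Walk.getVert_cons_succ]
      exact ih n (by simpa using Nat.lt_of_succ_lt_succ (by simpa using h))


theorem contract_isMatching_card {V : Type*} [Fintype V] (G : SimpleGraph V)
    (M : Set (Sym2 V)) (hM : IsMatching G M) {v : V} (c : G.Walk v v)
    (hc : IsAltCycle G M c) (k : ℕ) (hk : c.length = 2 * k + 1) :
    IsMatching (contraction G {u | u ∈ c.support}) (contractEdges {u | u ∈ c.support} M) ∧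
      (contractEdges {u | u ∈ c.support} M).ncard = M.ncard - k := by
  classical
  obtain ⟨hcyc, -, halt⟩ := hc
  set C : Set V := {u | u ∈ c.support} with hC
  have hvC : v ∈ C := c.start_mem_support
  have helen : c.edges.length = 2 * k + 1 := by rw [c.length_edges, hk]
  -- key lemma: any vertex of the cycle other than v lies on an odd (matching) edge
  have key : ∀ x ∈ C, x ≠ v → ∃ (i : ℕ) (h : i < c.edges.length),
      Odd i ∧ x ∈ c.edges.get ⟨i, h⟩ := by
    intro x hx hxv
    obtain ⟨n, hn, hnle⟩ := Walk.mem_support_iff_exists_getVert.mp hx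
    have hn0 : n ≠ 0 := by
      rintro rfl; rw [c.getVert_zero] at hn; exact hxv hn.symm
    have hnlen : n ≠ c.length := by
      rintro rfl; exact hxv (by rw [← hn, c.getVert_length])
    have hnlt : n < c.length := lt_of_le_of_ne hnle hnlen
    rcases Nat.even_or_odd n with hev | hodd
    · -- n even, n ≥ 1, use edge n-1
      have hn1 : 1 ≤ n := Nat.one_le_iff_ne_zero.mpr hn0
      have h1 : n - 1 < c.edges.length := by omega
      refine ⟨n - 1, h1, ?_, ?_⟩
      · rcases hev with ⟨m, hm⟩; exact ⟨m - 1, by omega⟩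
      · rw [edges_get_eq]
        have : n - 1 + 1 = n := by omega
        rw [this, hn]
        exact Sym2.mem_mk_right _ _
    · refine ⟨n, by omega, hodd, ?_⟩
      rw [edges_get_eq, hn]
      exact Sym2.mem_mk_left _ _
  -- any matching edge containing a cycle vertex ≠ v is a cycle edge
  have key2 : ∀ e ∈ M, ∀ x ∈ C, x ≠ v → x ∈ e → e ∈ c.edges := by
    intro e heM x hx hxv hxe
    obtain ⟨i, hi, hiodd, hxi⟩ := key x hx hxv
    have hiM : c.edges.get ⟨i, hi⟩ ∈ M := (halt i hi).mpr hiodd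
    by_cases hef : e = c.edges.get ⟨i, hi⟩
    · rw [hef]; exact List.get_mem _ _
    · exact absurd hxi (hM.2 e heM _ hiM hef x hxe)
  -- the vertex map
  set ψ : Option {x : V // x ∉ C} → V := fun o => o.elim v Subtype.val with hψ
  have hψinj : Function.Injective ψ := by
    rintro (_ | a) (_ | b) h
    · rfl
    · have h' : v = b.1 := h
      exact absurd (show b.1 ∈ C by rw [← h']; exact hvC) b.2
    · have h' : a.1 = v := h
      exact absurd (show a.1 ∈ C by rw [h']; exact hvC) a.2
    · exact congrArg some (Subtype.ext h)
  set φ : Sym2 (Option {x : V // x ∉ C}) → Sym2 V := Sym2.map ψ with hφ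
  have hφinj : Function.Injective φ := Sym2.map.injective hψinj
  -- image of contractEdges under φ
  have hmapsto : ∀ e ∈ contractEdges C M, φ e ∈ M ∧ φ e ∉ c.edges := by
    rintro e (⟨u, w, hu, hw, huwM, rfl⟩ | ⟨u, c', hu, hc', hucM, rfl⟩)
    · refine ⟨by simpa [hφ, hψ] using huwM, fun hce => hu ?_⟩
      have := c.fst_mem_support_of_mem_edges (by simpa [hφ, hψ] using hce)
      exact this
    · have hc'v : c' = v := by
        by_contra hne
        have := key2 _ hucM c' hc' hne (Sym2.mem_mk_right _ _)
        exact hu (c.fst_mem_support_of_mem_edges this)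
      subst hc'v
      refine ⟨by simpa [hφ, hψ, Sym2.eq_swap] using hucM, fun hce => hu ?_⟩
      exact c.snd_mem_support_of_mem_edges (by simpa [hφ, hψ] using hce)
  have hsurj : ∀ (a b : V), s(a, b) ∈ M → s(a, b) ∉ c.edges →
      ∃ e' ∈ contractEdges C M, φ e' = s(a, b) := by
    intro a b heM hece
    · have hab : a ≠ b := (G.ne_of_adj (hM.1 heM))
      have hcase : ∀ x y : V, s(x, y) = s(a, b) → x ∈ C → x = v := by
        intro x y hxy hxC
        by_contra hne
        exact hece (hxy ▸ key2 _ (hxy ▸ heM) x hxC hne (hxy ▸ Sym2.mem_mk_left x y))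
      by_cases ha : a ∈ C <;> by_cases hb : b ∈ C
      · exfalso
        have hav := hcase a b rfl ha
        have hbv := hcase b a (Sym2.eq_swap) hb
        exact hab (hav.trans hbv.symm)
      · have hav := hcase a b rfl ha
        refine ⟨s(none, some ⟨b, hb⟩), Or.inr ⟨b, a, hb, ha, by rwa [Sym2.eq_swap], rfl⟩, ?_⟩
        rw [hφ, Sym2.map_pair_eq]
        show s(v, b) = s(a, b)
        rw [hav]
      · have hbv := hcase b a (Sym2.eq_swap) hb
        refine ⟨s(none, some ⟨a, ha⟩), Or.inr ⟨a, b, ha, hb, heM, rfl⟩, ?_⟩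
        rw [hφ, Sym2.map_pair_eq]
        show s(v, a) = s(a, b)
        rw [hbv]
        exact Sym2.eq_swap
      · exact ⟨s(some ⟨a, ha⟩, some ⟨b, hb⟩), Or.inl ⟨a, b, ha, hb, heM, rfl⟩,
          by simp [hφ, hψ]⟩
  have himage : φ '' (contractEdges C M) = M \ {e | e ∈ c.edges} := by
    ext e
    constructor
    · rintro ⟨e', he', rfl⟩
      exact ⟨(hmapsto e' he').1, (hmapsto e' he').2⟩
    · rintro ⟨heM, hece⟩
      induction e using Sym2.ind with
      | _ a b =>
        obtain ⟨e', he', h⟩ := hsurj a b heM hece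
        exact ⟨e', he', h⟩
  constructor
  · constructor
    · rintro e (⟨u, w, hu, hw, huwM, rfl⟩ | ⟨u, c', hu, hc', hucM, rfl⟩)
      · exact (SimpleGraph.mem_edgeSet _).mpr (hM.1 huwM)
      · exact (SimpleGraph.mem_edgeSet _).mpr ⟨c', hc', (hM.1 hucM)⟩
    · intro e he f hf hef x hxe hxf
      have h1 := (hmapsto e he).1
      have h2 := (hmapsto f hf).1
      have hne : φ e ≠ φ f := fun h => hef (hφinj h)
      have hx1 : ψ x ∈ φ e := Sym2.mem_map.mpr ⟨x, hxe, rfl⟩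
      have hx2 : ψ x ∈ φ f := Sym2.mem_map.mpr ⟨x, hxf, rfl⟩
      exact hM.2 _ h1 _ h2 hne _ hx1 hx2
  · -- cardinality
    have hMfin : M.Finite := Set.toFinite M
    have hcard1 : (contractEdges C M).ncard = (M \ {e | e ∈ c.edges}).ncard := by
      rw [← himage, Set.ncard_image_of_injective _ hφinj]
    have hS : M \ {e | e ∈ c.edges} = M \ (M ∩ {e | e ∈ c.edges}) :=
      Set.diff_self_inter.symm
    -- count the cycle edges in M
    have hnodup : c.edges.Nodup := hcyc.edges_nodup
    have hcardS : (M ∩ {e | e ∈ c.edges}).ncard = k := by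
      have hf : ∀ i : Fin k, 2 * i.1 + 1 < c.edges.length := fun i => by
        have := i.2; omega
      have himg : (fun i : Fin k => c.edges.get ⟨2 * i.1 + 1, hf i⟩) '' Set.univ
          = M ∩ {e | e ∈ c.edges} := by
        ext e
        constructor
        · rintro ⟨i, -, rfl⟩
          exact ⟨(halt _ (hf i)).mpr ⟨i.1, by ring⟩, List.get_mem _ _⟩
        · rintro ⟨heM, hece⟩
          obtain ⟨⟨j, hj⟩, hj2⟩ := List.mem_iff_get.mp hece
          have hjodd : Odd j := (halt j hj).mp (hj2 ▸ heM)
          obtain ⟨m, hm⟩ := hjodd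
          have hmk : m < k := by omega
          have h21 : 2 * m + 1 = j := by omega
          subst h21
          exact ⟨⟨m, hmk⟩, Set.mem_univ _, hj2⟩
      have hinj : Set.InjOn (fun i : Fin k => c.edges.get ⟨2 * i.1 + 1, hf i⟩) Set.univ := by
        intro i _ j _ hij
        have := List.nodup_iff_injective_get.mp hnodup hij
        have : 2 * i.1 + 1 = 2 * j.1 + 1 := congrArg Fin.val this
        exact Fin.ext (by omega)
      rw [← himg, Set.ncard_image_of_injOn hinj, Set.ncard_univ, Nat.card_eq_fintype_card,
        Fintype.card_fin]
    rw [hcard1, hS, Set.ncard_diff (Set.inter_subset_left), hcardS]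
end

section
/- Let G be a finite simple graph with edge weights w: E(G) → ℝ and vertex weights y: V(G) → ℝ such that every edge has nonnegative adjusted weight. Let M be a matching and T an M-alternating tree all of whose edges are weightless, with positive vertex set T₊ and negative vertex set T₋. Let r ≥ 0 be a real number such that r ≤ w(e) − y(u) − y(v) for every edge e = {u,v} of G with u ∈ T₊ and v ∉ T₊ ∪ T₋, and 2r ≤ w(e) − y(u) − y(v) for every edge e = {u,v} of G with u, v ∈ T₊. Define y' by y'(x) = y(x) + r for x ∈ T₊, y'(x) = y(x) − r for x ∈ T₋, and y'(x) = y(x) otherwise. Then every edge of G has nonnegative adjusted weight with respect to y', and every edge of T remains weightless with respect to y'. -/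
/-- An `M`-alternating tree in `G`, encoded by its vertex set, a parent function, a depth
function, and a root.  The root is `M`-unmatched and has depth `0`; every non-root vertex
is adjacent in `G` to its parent, has depth one more than its parent, and the edge to its
parent lies in `M` exactly when the vertex lies at even depth.  Vertices at even depth are
called positive (`T₊`), vertices at odd depth negative (`T₋`). -/
structure IsAltTree {V : Type*} (G : SimpleGraph V) (M : Set (Sym2 V)) (verts : Finset V)
    (parent : V → V) (depth : V → ℕ) (root : V) : Prop where
  root_mem : root ∈ verts
  root_unmatched : ¬ Matched M root
  depth_root : depth root = 0
  parent_mem : ∀ v ∈ verts, v ≠ root → parent v ∈ verts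
  parent_adj : ∀ v ∈ verts, v ≠ root → G.Adj v (parent v)
  depth_parent : ∀ v ∈ verts, v ≠ root → depth v = depth (parent v) + 1
  tree_alternating : ∀ v ∈ verts, v ≠ root → (s(v, parent v) ∈ M ↔ Even (depth v))

theorem reweight_admissible {V : Type*} [Fintype V] [DecidableEq V] (G : SimpleGraph V)
    (w : Sym2 V → ℝ) (y : V → ℝ)
    (hnonneg : ∀ a b : V, G.Adj a b → 0 ≤ w s(a, b) - y a - y b)
    (M : Set (Sym2 V)) (verts : Finset V) (parent : V → V) (depth : V → ℕ) (root : V)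
    (hT : IsAltTree G M verts parent depth root)
    (hweightless : ∀ x ∈ verts, x ≠ root → w s(x, parent x) - y x - y (parent x) = 0)
    (r : ℝ) (hr : 0 ≤ r)
    (h1 : ∀ a b : V, G.Adj a b → a ∈ verts → Even (depth a) → b ∉ verts →
      r ≤ w s(a, b) - y a - y b)
    (h2 : ∀ a b : V, G.Adj a b → a ∈ verts → Even (depth a) → b ∈ verts → Even (depth b) →
      2 * r ≤ w s(a, b) - y a - y b)
    (y' : V → ℝ)
    (hy' : ∀ x : V, y' x =
      if x ∈ verts then (if Even (depth x) then y x + r else y x - r) else y x) :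
    (∀ a b : V, G.Adj a b → 0 ≤ w s(a, b) - y' a - y' b) ∧
      (∀ x ∈ verts, x ≠ root → w s(x, parent x) - y' x - y' (parent x) = 0) := by

  constructor
  · intro a b hab
    have hw := hnonneg a b hab
    have hsw : w s(a, b) = w s(b, a) := by rw [Sym2.eq_swap]
    rw [hy' a, hy' b]
    by_cases ha : a ∈ verts <;> by_cases hb : b ∈ verts
    · rw [if_pos ha, if_pos hb]
      by_cases hea : Even (depth a) <;> by_cases heb : Even (depth b)
      · rw [if_pos hea, if_pos heb]
        have := h2 a b hab ha hea hb heb; linarith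
      · rw [if_pos hea, if_neg heb]; linarith
      · rw [if_neg hea, if_pos heb]; linarith
      · rw [if_neg hea, if_neg heb]; linarith
    · rw [if_pos ha, if_neg hb]
      by_cases hea : Even (depth a)
      · rw [if_pos hea]
        have := h1 a b hab ha hea hb; linarith
      · rw [if_neg hea]; linarith
    · rw [if_neg ha, if_pos hb]
      by_cases heb : Even (depth b)
      · rw [if_pos heb]
        have := h1 b a hab.symm hb heb ha; linarith
      · rw [if_neg heb]; linarith
    · rw [if_neg ha, if_neg hb]; linarith
  · intro x hx hxr
    have hp : parent x ∈ verts := hT.parent_mem x hx hxr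
    have hd : depth x = depth (parent x) + 1 := hT.depth_parent x hx hxr
    have hpar : Even (depth x) ↔ ¬ Even (depth (parent x)) := by
      rw [hd, Nat.even_add_one]
    have hw := hweightless x hx hxr
    rw [hy' x, hy' (parent x), if_pos hx, if_pos hp]
    by_cases hex : Even (depth x)
    · rw [if_pos hex, if_neg (hpar.mp hex)]; linarith
    · rw [if_neg hex, if_pos (not_not.mp (fun h => hex (hpar.mpr h)))]; linarith
end

section
/- Let G be a finite simple graph with vertex set V. For every matching M on G there exists a regal matching M̂ on the crown Crown(G) whose circlet–circlet edges are exactly the circlet copies of the edges of M. -/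
/-- The crown of `G`: three disjoint copies of the vertex set of `G` — the circlet
(`Sum.inl`), the arches (`Sum.inr ∘ Sum.inl`) and the monde (`Sum.inr ∘ Sum.inr`).  Two
circlet vertices are adjacent iff the corresponding vertices are adjacent in `G`; each
circlet vertex is adjacent to its own arch copy; every arch vertex is adjacent to every
monde vertex; there are no other edges. -/
def crown {V : Type*} (G : SimpleGraph V) : SimpleGraph (V ⊕ V ⊕ V) where
  Adj x y :=
    match x, y with
    | Sum.inl u, Sum.inl w => G.Adj u w
    | Sum.inl u, Sum.inr (Sum.inl w) => u = w
    | Sum.inr (Sum.inl u), Sum.inl w => u = w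
    | Sum.inr (Sum.inl _), Sum.inr (Sum.inr _) => True
    | Sum.inr (Sum.inr _), Sum.inr (Sum.inl _) => True
    | _, _ => False
  symm := by
    constructor
    rintro (u | u | u) (w | w | w) h <;>
      first
        | exact G.adj_symm h
        | exact Eq.symm h
        | exact False.elim h
        | trivial
  loopless := by
    constructor
    rintro (u | u | u) h
    · exact G.irrefl h
    · exact False.elim h
    · exact False.elim h

/-- A matching on the crown is regal if every circlet vertex and every arch vertex is
matched. -/
def IsRegal {V : Type*} (Mh : Set (Sym2 (V ⊕ V ⊕ V))) : Prop :=
  (∀ u : V, Matched Mh (Sum.inl u)) ∧ (∀ u : V, Matched Mh (Sum.inr (Sum.inl u)))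

/-!
Copy `M` into the circlet. Every circlet vertex left unmatched by `M` is matched to its own
arch, and the arch of every `M`-matched vertex to its own monde copy. Each arch is then used
exactly once, and the three pieces are matchings on pairwise disjoint vertex sets.
-/

open Function

section

variable {V W : Type*}

theorem matched_union {M₁ M₂ : Set (Sym2 V)} {v : V} :
    Matched (M₁ ∪ M₂) v ↔ Matched M₁ v ∨ Matched M₂ v := by
  simp only [Matched, Set.mem_union, or_and_right, exists_or]

theorem IsMatching.union {G : SimpleGraph V} {M₁ M₂ : Set (Sym2 V)}
    (h₁ : IsMatching G M₁) (h₂ : IsMatching G M₂)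
    (hdisj : ∀ v, Matched M₁ v → ¬Matched M₂ v) : IsMatching G (M₁ ∪ M₂) := by
  refine ⟨Set.union_subset h₁.1 h₂.1, ?_⟩
  rintro e (he | he) f (hf | hf) hef v hve hvf
  · exact h₁.2 e he f hf hef v hve hvf
  · exact hdisj v ⟨e, he, hve⟩ ⟨f, hf, hvf⟩
  · exact hdisj v ⟨f, hf, hvf⟩ ⟨e, he, hve⟩
  · exact h₂.2 e he f hf hef v hve hvf

theorem matched_image_map {f : V → W} {M : Set (Sym2 V)} {x : W} :
    Matched (Sym2.map f '' M) x ↔ ∃ v, f v = x ∧ Matched M v := by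
  constructor
  · rintro ⟨_, ⟨e, he, rfl⟩, hx⟩
    obtain ⟨v, hv, rfl⟩ := Sym2.mem_map.1 hx
    exact ⟨v, rfl, e, he, hv⟩
  · rintro ⟨v, rfl, e, he, hv⟩
    exact ⟨Sym2.map f e, ⟨e, he, rfl⟩, Sym2.mem_map.2 ⟨v, hv, rfl⟩⟩

theorem IsMatching.map {G : SimpleGraph V} {H : SimpleGraph W} {M : Set (Sym2 V)}
    (hM : IsMatching G M) (φ : G ↪g H) : IsMatching H (Sym2.map φ '' M) := by
  refine ⟨?_, ?_⟩
  · rintro _ ⟨e, he, rfl⟩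
    exact φ.toHom.map_mem_edgeSet (hM.1 he)
  · rintro _ ⟨e, he, rfl⟩ _ ⟨f, hf, rfl⟩ hne v hve hvf
    obtain ⟨x, hx, rfl⟩ := Sym2.mem_map.1 hve
    obtain ⟨y, hy, hyx⟩ := Sym2.mem_map.1 hvf
    rw [φ.injective hyx] at hy
    exact hM.2 e he f hf (ne_of_apply_ne _ hne) x hx hy

def pairEdges (a b : V → W) (S : Set V) : Set (Sym2 W) :=
  (fun u => s(a u, b u)) '' S

theorem matched_pairEdges {a b : V → W} {S : Set V} {x : W} :
    Matched (pairEdges a b S) x ↔ ∃ u ∈ S, a u = x ∨ b u = x := by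
  simp [Matched, pairEdges, Sym2.mem_iff, eq_comm]

theorem isMatching_pairEdges {H : SimpleGraph W} {a b : V → W} {S : Set V}
    (ha : Injective a) (hb : Injective b) (hab : ∀ u w, a u ≠ b w)
    (hadj : ∀ u ∈ S, H.Adj (a u) (b u)) : IsMatching H (pairEdges a b S) := by
  refine ⟨?_, ?_⟩
  · rintro _ ⟨u, hu, rfl⟩
    exact hadj u hu
  · rintro _ ⟨u, -, rfl⟩ _ ⟨w, -, rfl⟩ hne v hvu hvw
    suffices u = w from hne (by rw [this])
    rcases Sym2.mem_iff.1 hvu with rfl | rfl <;> rcases Sym2.mem_iff.1 hvw with h | h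
    · exact ha h
    · exact (hab u w h).elim
    · exact (hab w u h.symm).elim
    · exact hb h

def circletEmbedding (G : SimpleGraph V) : G ↪g crown G :=
  ⟨Embedding.inl, Iff.rfl⟩

def crownExtension (M : Set (Sym2 V)) : Set (Sym2 (V ⊕ V ⊕ V)) :=
  Sym2.map Sum.inl '' M ∪ pairEdges Sum.inl (Sum.inr ∘ Sum.inl) {u | ¬Matched M u} ∪
    pairEdges (Sum.inr ∘ Sum.inl) (Sum.inr ∘ Sum.inr) {u | Matched M u}

theorem isMatching_crownExtension {G : SimpleGraph V} {M : Set (Sym2 V)}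
    (hM : IsMatching G M) : IsMatching (crown G) (crownExtension M) := by
  refine ((hM.map (circletEmbedding G)).union
    (isMatching_pairEdges Sum.inl_injective (Sum.inr_injective.comp Sum.inl_injective)
      (fun _ _ => Sum.inl_ne_inr) (fun _ _ => rfl)) ?_).union
    (isMatching_pairEdges (Sum.inr_injective.comp Sum.inl_injective)
      (Sum.inr_injective.comp Sum.inr_injective)
      (fun _ _ h => Sum.inl_ne_inr (Sum.inr_injective h)) (fun _ _ => trivial)) ?_
  · intro v h₁ h₂
    rw [matched_image_map] at h₁
    rw [matched_pairEdges] at h₂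
    obtain ⟨x, rfl, hx⟩ := h₁
    obtain ⟨u, hu, h | h⟩ := h₂
    · exact hu (Sum.inl_injective h ▸ hx)
    · exact Sum.inr_ne_inl h
  · intro v h₁₂ h₃
    rw [matched_union, matched_image_map, matched_pairEdges] at h₁₂
    rw [matched_pairEdges] at h₃
    obtain ⟨u, hu, h₃ | h₃⟩ := h₃ <;> subst h₃
    · rcases h₁₂ with ⟨x, hx, -⟩ | ⟨w, hw, h | h⟩
      · exact Sum.inl_ne_inr hx
      · exact Sum.inl_ne_inr h
      · exact hw (Sum.inl_injective (Sum.inr_injective h) ▸ hu)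
    · rcases h₁₂ with ⟨x, hx, -⟩ | ⟨w, -, h | h⟩
      · exact Sum.inl_ne_inr hx
      · exact Sum.inl_ne_inr h
      · exact Sum.inl_ne_inr (Sum.inr_injective h)

theorem isRegal_crownExtension (M : Set (Sym2 V)) : IsRegal (crownExtension M) := by
  simp only [IsRegal, crownExtension, matched_union, matched_image_map, matched_pairEdges]
  refine ⟨fun u => ?_, fun u => ?_⟩ <;> by_cases hu : Matched M u
  · exact Or.inl (Or.inl ⟨u, rfl, hu⟩)
  · exact Or.inl (Or.inr ⟨u, hu, Or.inl rfl⟩)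
  · exact Or.inr ⟨u, hu, Or.inl rfl⟩
  · exact Or.inl (Or.inr ⟨u, hu, Or.inr rfl⟩)

theorem inl_inl_mem_crownExtension_iff {M : Set (Sym2 V)} {u w : V} :
    s(Sum.inl u, Sum.inl w) ∈ crownExtension M ↔ s(u, w) ∈ M := by
  rw [crownExtension, ← Sym2.map_mk, Set.mem_union, Set.mem_union,
    (Sym2.map.injective Sum.inl_injective).mem_set_image]
  simp [pairEdges]

end

theorem crown_regal_extension_general {V : Type*} (G : SimpleGraph V)
    (M : Set (Sym2 V)) (hM : IsMatching G M) :
    ∃ Mh : Set (Sym2 (V ⊕ V ⊕ V)), IsMatching (crown G) Mh ∧ IsRegal Mh ∧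
      ∀ u w : V, (s(Sum.inl u, Sum.inl w) ∈ Mh ↔ s(u, w) ∈ M) :=
  ⟨crownExtension M, isMatching_crownExtension hM, isRegal_crownExtension M,
    fun _ _ => inl_inl_mem_crownExtension_iff⟩

theorem crown_regal_extension {V : Type*} [Fintype V] (G : SimpleGraph V)
    (M : Set (Sym2 V)) (hM : IsMatching G M) :
    ∃ Mh : Set (Sym2 (V ⊕ V ⊕ V)), IsMatching (crown G) Mh ∧ IsRegal Mh ∧
      ∀ u w : V, (s(Sum.inl u, Sum.inl w) ∈ Mh ↔ s(u, w) ∈ M) :=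
  crown_regal_extension_general G M hM
end

section
/- Let G be a finite simple graph and let M̂ be a regal matching on the crown Crown(G). If there exists an M̂-augmenting path in Crown(G), then there exists an M̂-augmenting path in Crown(G) all of whose internal vertices lie outside the monde (i.e., it visits the monde only at its two endpoints). -/
/-!
The endpoints of an augmenting path are unmatched, so for a regal matching they lie in the monde.
All monde vertices have the same neighbours, the arches. If `x - m - y` is a stretch of an
augmenting path `a ⋯ b` with `m` an interior monde vertex, one of the edges `xm`, `my` is
unmatched: if `xm` is, `a ⋯ x - b` is a shorter augmenting path, otherwise `a - y ⋯ b` is.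
Hence a shortest augmenting path has no interior monde vertex.
-/

namespace List

variable {α : Type*} {M : Set α} {l t : List α} {e e' : α}

theorem IsChain.alternating_append_singleton
    (h : (l ++ e :: t).IsChain (fun e f => (e ∈ M ↔ f ∉ M))) (he : e ∈ M ↔ e' ∈ M) :
    (l ++ [e']).IsChain (fun e f => (e ∈ M ↔ f ∉ M)) := by
  obtain ⟨hl, -, hlast⟩ := isChain_append.1 (isChain_split.1 h).1
  refine isChain_append.2 ⟨hl, isChain_singleton _, fun x hx y hy => ?_⟩
  obtain rfl : y = e' := by simpa using hy.symm
  rw [← he]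
  exact hlast x hx e rfl

end List

namespace SimpleGraph

variable {V : Type*} {G : SimpleGraph V}

theorem Walk.exists_eq_append_cons_cons {u v m : V} {p : G.Walk u v} (hm : m ∈ p.support)
    (hu : m ≠ u) (hv : m ≠ v) :
    ∃ (x y : V) (hxm : G.Adj x m) (hmy : G.Adj m y) (q : G.Walk u x) (r : G.Walk y v),
      p = q.append (cons hxm (cons hmy r)) := by
  obtain ⟨q, r, rfl⟩ := Walk.mem_support_iff_exists_append.1 hm
  cases r with
  | nil => exact absurd rfl hv
  | cons hmy r =>
    have hq : ¬q.Nil := Walk.not_nil_of_ne hu.symm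
    refine ⟨_, _, q.adj_penultimate hq, hmy, q.dropLast, r, ?_⟩
    conv_lhs => rw [← Walk.concat_dropLast (q.adj_penultimate hq)]
    simp [Walk.concat_eq_append, ← Walk.append_assoc]

end SimpleGraph

namespace IsAugPath

open SimpleGraph

variable {V : Type*} {G : SimpleGraph V} {M : Set (Sym2 V)} {a b : V}

theorem reverse {p : G.Walk a b} (hp : IsAugPath G M p) :
    IsAugPath G M p.reverse := by
  obtain ⟨hpath, hne, halt, ha, hb⟩ := hp
  refine ⟨hpath.reverse, by simpa using hne, ?_, hb, ha⟩
  rw [Walk.edges_reverse]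
  exact List.isChain_reverse.2 (List.IsChain.imp (fun e f h => by tauto) halt)

theorem concat_of_append_cons_cons {x m y : V} {hxm : G.Adj x m} {hmy : G.Adj m y}
    {q : G.Walk a x} {r : G.Walk y b} (hp : IsAugPath G M (q.append (.cons hxm (.cons hmy r))))
    (hxmM : s(x, m) ∉ M) (hxb : G.Adj x b) :
    IsAugPath G M (q.concat hxb) := by
  obtain ⟨hpath, -, halt, ha, hb⟩ := hp
  have hbq : b ∉ q.support := fun hbq =>
    hpath.disjoint_support_of_append Walk.not_nil_cons hbq (by simp)
  have hxbM : s(x, b) ∉ M := fun h => hb ⟨_, h, Sym2.mem_mk_right _ _⟩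
  refine ⟨hpath.of_append_left.concat hbq hxb, by simp [Walk.edges_concat], ?_, ha, hb⟩
  rw [Walk.edges_concat, List.concat_eq_append]
  rw [Walk.edges_append, Walk.edges_cons, Walk.edges_cons] at halt
  exact List.IsChain.alternating_append_singleton halt (iff_of_false hxmM hxbM)

theorem exists_shorter_of_neighborSet_subset {p : G.Walk a b} (hp : IsAugPath G M p) {m : V}
    (hm : m ∈ p.support) (hma : m ≠ a) (hmb : m ≠ b)
    (ha : G.neighborSet m ⊆ G.neighborSet a) (hb : G.neighborSet m ⊆ G.neighborSet b) :
    ∃ (a' b' : V) (p' : G.Walk a' b'), IsAugPath G M p' ∧ p'.length < p.length := by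
  obtain ⟨x, y, hxm, hmy, q, r, rfl⟩ := Walk.exists_eq_append_cons_cons hm hma hmb
  by_cases hxmM : s(x, m) ∈ M
  · -- then `s(m, y) ∉ M`, and the shortcut is taken on the reversed path
    have hxm_iff : s(x, m) ∈ M ↔ s(m, y) ∉ M := by
      have h : (q.append (.cons hxm (.cons hmy r))).edges.IsChain
          (fun e f => (e ∈ M ↔ f ∉ M)) := hp.2.2.1
      rw [Walk.edges_append, Walk.edges_cons, Walk.edges_cons] at h
      exact (List.isChain_append_cons_cons.1 h).2.1
    have hrev : (q.append (.cons hxm (.cons hmy r))).reverse =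
        r.reverse.append (.cons hmy.symm (.cons hxm.symm q.reverse)) := by
      simp [Walk.reverse_append, ← Walk.append_assoc]
    have hp' := hp.reverse
    rw [hrev] at hp'
    exact ⟨_, _, _, hp'.concat_of_append_cons_cons (by rw [Sym2.eq_swap]; exact hxm_iff.1 hxmM)
      (ha hmy).symm, by simp; omega⟩
  · exact ⟨_, _, _, hp.concat_of_append_cons_cons hxmM (hb hxm.symm).symm, by simp⟩

end IsAugPath

section Crown

variable {V : Type*}

theorem crown_neighborSet_monde (G : SimpleGraph V) (u w : V) :
    (crown G).neighborSet (Sum.inr (Sum.inr u)) = (crown G).neighborSet (Sum.inr (Sum.inr w)) := by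
  ext (x | x | x) <;> exact Iff.rfl

theorem IsRegal.exists_eq_monde_of_not_matched {M : Set (Sym2 (V ⊕ V ⊕ V))} (hM : IsRegal M)
    {v : V ⊕ V ⊕ V} (hv : ¬Matched M v) : ∃ u, v = Sum.inr (Sum.inr u) := by
  rcases v with u | u | u
  · exact absurd (hM.1 u) hv
  · exact absurd (hM.2 u) hv
  · exact ⟨u, rfl⟩

end Crown

theorem crown_augPath_avoiding_monde_general {V : Type*} (G : SimpleGraph V)
    (Mh : Set (Sym2 (V ⊕ V ⊕ V))) (hreg : IsRegal Mh)
    (h : ∃ (a b : V ⊕ V ⊕ V) (p : (crown G).Walk a b), IsAugPath (crown G) Mh p) :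
    ∃ (a b : V ⊕ V ⊕ V) (p : (crown G).Walk a b), IsAugPath (crown G) Mh p ∧
      ∀ x ∈ p.support, x ≠ a → x ≠ b → ∀ u : V, x ≠ Sum.inr (Sum.inr u) := by
  classical
  have hlen : ∃ n, ∃ (a b : V ⊕ V ⊕ V) (p : (crown G).Walk a b),
      IsAugPath (crown G) Mh p ∧ p.length = n :=
    let ⟨a, b, p, hp⟩ := h
    ⟨_, a, b, p, hp, rfl⟩
  obtain ⟨a, b, p, hp, hpn⟩ := Nat.find_spec hlen
  refine ⟨a, b, p, hp, ?_⟩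
  rintro _ hm hma hmb u rfl
  obtain ⟨ua, rfl⟩ := hreg.exists_eq_monde_of_not_matched hp.2.2.2.1
  obtain ⟨ub, rfl⟩ := hreg.exists_eq_monde_of_not_matched hp.2.2.2.2
  obtain ⟨_, _, p', hp', hlt⟩ := hp.exists_shorter_of_neighborSet_subset hm hma hmb
    (crown_neighborSet_monde G u ua).subset (crown_neighborSet_monde G u ub).subset
  exact Nat.find_min hlen (hpn ▸ hlt) ⟨_, _, p', hp', rfl⟩

theorem crown_augPath_avoiding_monde {V : Type*} [Fintype V] (G : SimpleGraph V)
    (Mh : Set (Sym2 (V ⊕ V ⊕ V))) (hMh : IsMatching (crown G) Mh) (hreg : IsRegal Mh)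
    (h : ∃ (a b : V ⊕ V ⊕ V) (p : (crown G).Walk a b), IsAugPath (crown G) Mh p) :
    ∃ (a b : V ⊕ V ⊕ V) (p : (crown G).Walk a b), IsAugPath (crown G) Mh p ∧
      ∀ x ∈ p.support, x ≠ a → x ≠ b → ∀ u : V, x ≠ Sum.inr (Sum.inr u) :=
  crown_augPath_avoiding_monde_general G Mh hreg h
end
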